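/- Let R be a commutative Noetherian ring, let I be an ideal of R containing a nonzerodivisor, and let x ∈ I be a nonzerodivisor on R. Then tr_R(I) = (I·(x : I) : x). -/

import Mathlib

/-!
A homomorphism `f : I → R` satisfies `f(a) b = a f(b)` for `a, b ∈ I`. Taking `b = x` shows
`f(I) · x ⊆ I · f(x)` and `f(x) ∈ (x : I)`, so `x · tr(I) ⊆ I (x : I)`. Conversely every `b ∈ (x : I)`
defines `c ↦ b c / x` in `Hom(I, R)`, so `I (x : I) ⊆ x · tr(I)`. Hence `I (x : I) = x · tr(I)`,
and since `x` is a nonzerodivisor, `(x · tr(I) : x) = tr(I)`.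
-/

/-- The trace ideal of an `R`-module `M`: the ideal of `R` generated by all values `f(m)`
for `f ∈ Hom_R(M, R)` and `m ∈ M`. -/
def traceIdeal (R : Type*) (M : Type*) [CommRing R] [AddCommGroup M] [Module R M] : Ideal R :=
  Ideal.span {r : R | ∃ (f : M →ₗ[R] R) (m : M), f m = r}

open Ideal nonZeroDivisors

section TraceIdeal

variable {R M : Type*} [CommRing R] [AddCommGroup M] [Module R M]

theorem apply_mem_traceIdeal (f : M →ₗ[R] R) (m : M) : f m ∈ traceIdeal R M :=
  subset_span ⟨f, m, rfl⟩

theorem traceIdeal_le_iff {J : Ideal R} :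
    traceIdeal R M ≤ J ↔ ∀ (f : M →ₗ[R] R) (m : M), f m ∈ J := by
  rw [traceIdeal, span_le]
  exact ⟨fun h f m => h ⟨f, m, rfl⟩, by rintro h _ ⟨f, m, rfl⟩; exact h f m⟩

end TraceIdeal

namespace Ideal

variable {R : Type*} [CommRing R] {I : Ideal R} {x : R}

theorem linearMap_apply_mul_comm (f : I →ₗ[R] R) (a b : I) : f a * b = a * f b := by
  have hab : (b : R) • a = (a : R) • b := Subtype.ext (mul_comm _ _)
  rw [mul_comm, ← smul_eq_mul, ← map_smul, hab, map_smul, smul_eq_mul]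

theorem linearMap_apply_mem_colon (f : I →ₗ[R] R) (hxI : x ∈ I) :
    f ⟨x, hxI⟩ ∈ (span {x}).colon (I : Set R) :=
  Submodule.mem_colon.2 fun c hc =>
    mem_span_singleton'.2 ⟨f ⟨c, hc⟩,
      (linearMap_apply_mul_comm f ⟨c, hc⟩ ⟨x, hxI⟩).trans (mul_comm _ _)⟩

/-- The homomorphism `c ↦ b * c / x`. -/
noncomputable def divOfMemColon (hx : x ∈ R⁰) {b : R} (hb : b ∈ (span {x}).colon (I : Set R)) :
    I →ₗ[R] R :=
  (LinearMap.mulLeft R b ∘ₗ I.subtype).codRestrictOfInjective (LinearMap.mulLeft R x)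
    (fun _ _ => (mul_cancel_left_mem_nonZeroDivisors hx).1) fun c => by
      obtain ⟨u, hu⟩ := mem_span_singleton'.1 (Submodule.mem_colon.1 hb c c.2)
      exact ⟨u, by simpa [mul_comm] using hu⟩

theorem mul_divOfMemColon (hx : x ∈ R⁰) {b : R} (hb : b ∈ (span {x}).colon (I : Set R))
    (c : I) : x * divOfMemColon hx hb c = b * c :=
  LinearMap.codRestrictOfInjective_comp_apply (LinearMap.mulLeft R b ∘ₗ I.subtype)
    (LinearMap.mulLeft R x) _ _ c

theorem span_singleton_mul_colon_span_singleton (hx : x ∈ R⁰) (J : Ideal R) :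
    (span {x} * J).colon (span {x}) = J := by
  ext r
  rw [mem_colon_span_singleton, mem_span_singleton_mul]
  constructor
  · rintro ⟨z, hz, hxz⟩
    rwa [← (mul_cancel_left_mem_nonZeroDivisors hx).1 (hxz.trans (mul_comm r x))]
  · exact fun hr => ⟨r, hr, mul_comm x r⟩

theorem span_singleton_mul_traceIdeal (hxI : x ∈ I) (hx : x ∈ R⁰) :
    span {x} * traceIdeal R I = I * (span {x}).colon (I : Set R) := by
  refine le_antisymm (span_singleton_mul_le_iff.2 fun z hz => ?_) (mul_le.2 fun a ha b hb => ?_)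
  · have htrace : traceIdeal R I ≤ (I * (span {x}).colon (I : Set R)).colon (span {x}) :=
      traceIdeal_le_iff.2 fun f m => mem_colon_span_singleton.2 <|
        linearMap_apply_mul_comm f m ⟨x, hxI⟩ ▸ mul_mem_mul m.2 (linearMap_apply_mem_colon f hxI)
    exact mul_comm z x ▸ mem_colon_span_singleton.1 (htrace hz)
  · exact mem_span_singleton_mul.2 ⟨_, apply_mem_traceIdeal (divOfMemColon hx hb) ⟨a, ha⟩,
      (mul_divOfMemColon hx hb ⟨a, ha⟩).trans (mul_comm b a)⟩

end Ideal

theorem traceIdeal_eq_colon {R : Type*} [CommRing R] (I : Ideal R)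
    (x : R) (hxI : x ∈ I) (hx : x ∈ nonZeroDivisors R) :
    traceIdeal R ↥I = (I * ((Ideal.span {x}).colon I)).colon (Ideal.span {x}) := by
  rw [← span_singleton_mul_traceIdeal hxI hx, span_singleton_mul_colon_span_singleton hx]
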